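/- arXiv:1609.04088 — 6 statements merged into one kernel-verified Lean document; each statement's English description precedes it below -/
import Mathlib

section
/- Let X be an extremally disconnected Stone space, let F be a monotone map on the clopen subsets of X, and let L be the least clopen fixed point of F. Define the monotone operator Φ on the powerset of X by Φ(W) = { x ∈ X | ∃ C ⊆ X such that (for every clopen U ⊆ X with C ⊆ U one has x ∈ F(U)) and C ⊆ W }. Then the least fixed point of Φ in the powerset lattice of X equals L (as a subset of X). (The operator Φ encodes one round of the least clopen fixpoint game 𝒢^I_μ(F), in which ∃ moves from x to a set C with x ∈ F(U) for all clopen U ⊇ C and ∀ picks an element of C, all infinite plays being won by ∀; its least fixed point is ∃'s winning region, so this is Proposition 3.1(1).) -/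
/-!
If `W` is a prefixed point of `Φ`, let `G` be the intersection of the sets `F U` over the clopen
`U ⊇ W`. Choosing `C = W` shows `G ⊆ Φ W ⊆ W`. Since `G` is closed and `X` is extremally
disconnected, `interior G` is clopen; monotonicity of `F` gives `F (interior G) ⊆ G`, and since
`F (interior G)` is open it lies in `interior G`. So `interior G` is a prefixed clopen of `F`,
whence `L ⊆ interior G ⊆ W`. Conversely `L` itself is a prefixed point of `Φ`.
-/

open Set

theorem IsClosed.isClopen_interior {X : Type*} [TopologicalSpace X] [ExtremallyDisconnected X]
    {s : Set X} (hs : IsClosed s) : IsClopen (interior s) := by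
  refine ⟨?_, isOpen_interior⟩
  rw [interior_eq_compl_closure_compl]
  exact (ExtremallyDisconnected.open_closure _ hs.isOpen_compl).isClosed_compl

section ClopenGame

variable {X : Type*} [TopologicalSpace X] (F : Set X → Set X)

def clopenGameStep (W : Set X) : Set X :=
  {x | ∃ C : Set X, (∀ U : Set X, IsClopen U → C ⊆ U → x ∈ F U) ∧ C ⊆ W}

theorem clopenGameStep_mono : Monotone (clopenGameStep F) := by
  rintro W₁ W₂ hW x ⟨C, hC, hCW⟩
  exact ⟨C, hC, hCW.trans hW⟩

theorem clopenGameStep_subset_of_map_subset {A : Set X} (hA : IsClopen A) (hFA : F A ⊆ A) :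
    clopenGameStep F A ⊆ A := by
  rintro x ⟨C, hC, hCA⟩
  exact hFA (hC A hA hCA)

theorem iInter_map_clopen_superset_subset_clopenGameStep (W : Set X) :
    ⋂ U ∈ {U : Set X | IsClopen U ∧ W ⊆ U}, F U ⊆ clopenGameStep F W :=
  fun _ hx => ⟨W, fun U hU hWU => mem_iInter₂.mp hx U ⟨hU, hWU⟩, subset_rfl⟩

theorem exists_clopen_map_subset_of_clopenGameStep_subset [ExtremallyDisconnected X]
    (hFclopen : ∀ U : Set X, IsClopen U → IsClopen (F U))
    (hFmono : ∀ U V : Set X, IsClopen U → IsClopen V → U ⊆ V → F U ⊆ F V)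
    {W : Set X} (hW : clopenGameStep F W ⊆ W) :
    ∃ A : Set X, IsClopen A ∧ F A ⊆ A ∧ A ⊆ W := by
  set G := ⋂ U ∈ {U : Set X | IsClopen U ∧ W ⊆ U}, F U
  have hGW : G ⊆ W := (iInter_map_clopen_superset_subset_clopenGameStep F W).trans hW
  have hA : IsClopen (interior G) :=
    (isClosed_biInter fun U hU => (hFclopen U hU.1).isClosed).isClopen_interior
  have hAW : interior G ⊆ W := interior_subset.trans hGW
  have hFAG : F (interior G) ⊆ G :=
    subset_iInter₂ fun U ⟨hU, hWU⟩ => hFmono _ _ hA hU (hAW.trans hWU)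
  exact ⟨interior G, hA, interior_maximal hFAG (hFclopen _ hA).isOpen, hAW⟩

end ClopenGame

theorem lfp_gameI_mu_eq_least_clopen_fixedPoint_general
    {X : Type*} [TopologicalSpace X]
    [ExtremallyDisconnected X]
    (F : Set X → Set X) (hFclopen : ∀ U : Set X, IsClopen U → IsClopen (F U))
    (hFmono : ∀ U V : Set X, IsClopen U → IsClopen V → U ⊆ V → F U ⊆ F V)
    (L : Set X) (hLclopen : IsClopen L) (hLfix : F L = L)
    (hLleast : ∀ A : Set X, IsClopen A → F A ⊆ A → L ⊆ A)
    (Φ : Set X → Set X)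
    (hΦ : Φ = fun W : Set X =>
      {x : X | ∃ C : Set X, (∀ U : Set X, IsClopen U → C ⊆ U → x ∈ F U) ∧ C ⊆ W}) :
    Monotone Φ ∧ ∀ hm : Monotone Φ, OrderHom.lfp ⟨Φ, hm⟩ = L := by
  obtain rfl : Φ = clopenGameStep F := hΦ
  refine ⟨clopenGameStep_mono F, fun hm => le_antisymm ?_ ?_⟩
  · exact OrderHom.lfp_le _ (clopenGameStep_subset_of_map_subset F hLclopen hLfix.subset)
  · refine OrderHom.le_lfp _ fun W hW => ?_
    obtain ⟨A, hA, hFA, hAW⟩ :=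
      exists_clopen_map_subset_of_clopenGameStep_subset F hFclopen hFmono hW
    exact (hLleast A hA hFA).trans hAW

/-- Proposition 3.1(1): the least fixed point (in the powerset of `X`) of the operator
`Φ` encoding one round of the least clopen fixpoint game `𝒢^I_μ(F)` equals the least
clopen fixed point `L` of `F`. -/
theorem lfp_gameI_mu_eq_least_clopen_fixedPoint
    {X : Type*} [TopologicalSpace X] [CompactSpace X] [T2Space X]
    [TotallyDisconnectedSpace X] [ExtremallyDisconnected X]
    (F : Set X → Set X) (hFclopen : ∀ U : Set X, IsClopen U → IsClopen (F U))
    (hFmono : ∀ U V : Set X, IsClopen U → IsClopen V → U ⊆ V → F U ⊆ F V)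
    (L : Set X) (hLclopen : IsClopen L) (hLfix : F L = L)
    (hLleast : ∀ A : Set X, IsClopen A → F A ⊆ A → L ⊆ A)
    (Φ : Set X → Set X)
    (hΦ : Φ = fun W : Set X =>
      {x : X | ∃ C : Set X, (∀ U : Set X, IsClopen U → C ⊆ U → x ∈ F U) ∧ C ⊆ W}) :
    Monotone Φ ∧ ∀ hm : Monotone Φ, OrderHom.lfp ⟨Φ, hm⟩ = L :=
  lfp_gameI_mu_eq_least_clopen_fixedPoint_general F hFclopen hFmono L hLclopen hLfix hLleast Φ hΦ
end

section
/- Let X be an extremally disconnected Stone space, let F be a monotone map on the clopen subsets of X, and let G be the greatest clopen fixed point of F. Define the monotone operator Ψ on the powerset of X by Ψ(W) = { x ∈ X | ∃ C ⊆ X such that (for every clopen U ⊆ X with Int(C) ⊆ U one has x ∈ F(U)) and C ⊆ W }, where Int denotes topological interior. Then the greatest fixed point of Ψ in the powerset lattice of X equals G (as a subset of X). (The operator Ψ encodes one round of the greatest clopen fixpoint game 𝒢^I_ν(F), in which ∃ moves from x to a set C with x ∈ F(U) for all clopen U ⊇ Int(C) and ∀ picks an element of C, all infinite plays being won by ∃;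 its greatest fixed point is ∃'s winning region, so this is Proposition 3.1(2).) -/
/-!
A position `W` with `W ⊆ Ψ W` forces `W ⊆ F K` for the regular open `K = cl (int W)`, which is
clopen because `X` is extremally disconnected. As `F K` is closed, `K ⊆ F K`, so `K ⊆ G` and
`W ⊆ F K ⊆ F G = G`. Conversely `G ⊆ Ψ G` by playing `C = G`, since `G = int G`.
-/

namespace ClopenFixpointGame

variable {X : Type*} [TopologicalSpace X]

def gameIStep (F : Set X → Set X) (W : Set X) : Set X :=
  {x | ∃ C : Set X, (∀ U : Set X, IsClopen U → interior C ⊆ U → x ∈ F U) ∧ C ⊆ W}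

theorem gameIStep_mono (F : Set X → Set X) : Monotone (gameIStep F) :=
  fun _ _ hAB _ ⟨C, hC, hCW⟩ => ⟨C, hC, hCW.trans hAB⟩

theorem isClopen_closure_interior [ExtremallyDisconnected X] (W : Set X) :
    IsClopen (closure (interior W)) :=
  ⟨isClosed_closure, ExtremallyDisconnected.open_closure _ isOpen_interior⟩

theorem gameIStep_subset_apply_closure_interior [ExtremallyDisconnected X]
    (F : Set X → Set X) (W : Set X) : gameIStep F W ⊆ F (closure (interior W)) :=
  fun _ ⟨_, hC, hCW⟩ =>
    hC _ (isClopen_closure_interior W) ((interior_mono hCW).trans subset_closure)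

theorem closure_interior_subset_apply_of_subset_gameIStep [ExtremallyDisconnected X]
    {F : Set X → Set X} (hFclosed : ∀ U : Set X, IsClopen U → IsClosed (F U))
    {W : Set X} (hW : W ⊆ gameIStep F W) :
    closure (interior W) ⊆ F (closure (interior W)) :=
  (hFclosed _ (isClopen_closure_interior W)).closure_subset_iff.mpr <|
    interior_subset.trans <| hW.trans <| gameIStep_subset_apply_closure_interior F W

section Monotone

variable {F : Set X → Set X}
  (hFmono : ∀ U V : Set X, IsClopen U → IsClopen V → U ⊆ V → F U ⊆ F V)
include hFmono

theorem subset_gameIStep_of_subset_apply {A : Set X} (hA : IsClopen A) (hAF : A ⊆ F A) :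
    A ⊆ gameIStep F A :=
  fun _ hx => ⟨A, fun U hU hAU => hFmono A U hA hU (hA.isOpen.interior_eq ▸ hAU) (hAF hx),
    subset_rfl⟩

theorem subset_of_subset_gameIStep [ExtremallyDisconnected X]
    (hFclosed : ∀ U : Set X, IsClopen U → IsClosed (F U))
    {G : Set X} (hG : IsClopen G) (hGfix : F G = G)
    (hGgreatest : ∀ A : Set X, IsClopen A → A ⊆ F A → A ⊆ G)
    {W : Set X} (hW : W ⊆ gameIStep F W) : W ⊆ G := by
  have hK := isClopen_closure_interior W
  have hKG : closure (interior W) ⊆ G :=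
    hGgreatest _ hK (closure_interior_subset_apply_of_subset_gameIStep hFclosed hW)
  calc W ⊆ F (closure (interior W)) := hW.trans (gameIStep_subset_apply_closure_interior F W)
    _ ⊆ F G := hFmono _ _ hK hG hKG
    _ = G := hGfix

end Monotone

end ClopenFixpointGame

open ClopenFixpointGame in
theorem gfp_gameI_nu_eq_greatest_clopen_fixedPoint_general
    {X : Type*} [TopologicalSpace X]
    [ExtremallyDisconnected X]
    (F : Set X → Set X) (hFclopen : ∀ U : Set X, IsClopen U → IsClopen (F U))
    (hFmono : ∀ U V : Set X, IsClopen U → IsClopen V → U ⊆ V → F U ⊆ F V)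
    (G : Set X) (hGclopen : IsClopen G) (hGfix : F G = G)
    (hGgreatest : ∀ A : Set X, IsClopen A → A ⊆ F A → A ⊆ G)
    (Ψ : Set X → Set X)
    (hΨ : Ψ = fun W : Set X =>
      {x : X | ∃ C : Set X, (∀ U : Set X, IsClopen U → interior C ⊆ U → x ∈ F U) ∧ C ⊆ W}) :
    Monotone Ψ ∧ ∀ hm : Monotone Ψ, OrderHom.gfp ⟨Ψ, hm⟩ = G := by
  subst hΨ
  refine ⟨gameIStep_mono F, fun hm => le_antisymm ?_ ?_⟩
  · exact OrderHom.gfp_le _ fun W hW => subset_of_subset_gameIStep hFmono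
      (fun U hU => (hFclopen U hU).isClosed) hGclopen hGfix hGgreatest hW
  · exact OrderHom.le_gfp _ (subset_gameIStep_of_subset_apply hFmono hGclopen hGfix.ge)

/-- Proposition 3.1(2): the greatest fixed point (in the powerset of `X`) of the operator
`Ψ` encoding one round of the greatest clopen fixpoint game `𝒢^I_ν(F)` equals the greatest
clopen fixed point `G` of `F`. -/
theorem gfp_gameI_nu_eq_greatest_clopen_fixedPoint
    {X : Type*} [TopologicalSpace X] [CompactSpace X] [T2Space X]
    [TotallyDisconnectedSpace X] [ExtremallyDisconnected X]
    (F : Set X → Set X) (hFclopen : ∀ U : Set X, IsClopen U → IsClopen (F U))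
    (hFmono : ∀ U V : Set X, IsClopen U → IsClopen V → U ⊆ V → F U ⊆ F V)
    (G : Set X) (hGclopen : IsClopen G) (hGfix : F G = G)
    (hGgreatest : ∀ A : Set X, IsClopen A → A ⊆ F A → A ⊆ G)
    (Ψ : Set X → Set X)
    (hΨ : Ψ = fun W : Set X =>
      {x : X | ∃ C : Set X, (∀ U : Set X, IsClopen U → interior C ⊆ U → x ∈ F U) ∧ C ⊆ W}) :
    Monotone Ψ ∧ ∀ hm : Monotone Ψ, OrderHom.gfp ⟨Ψ, hm⟩ = G :=
  gfp_gameI_nu_eq_greatest_clopen_fixedPoint_general F hFclopen hFmono G hGclopen hGfix hGgreatest Ψ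
    hΨ
end

section
/- Let X be an extremally disconnected Stone space, let F be a monotone map on the clopen subsets of X, and let L be the least clopen fixed point of F. Define the monotone operator Φ' on the powerset of X by Φ'(W) = { x ∈ X | ∃ clopen U ⊆ X with x ∈ F(U) such that for every clopen U' ⊆ X with U ∩ U' ≠ ∅ there exists x' ∈ U' ∩ W }. Then the least fixed point of Φ' in the powerset lattice of X equals L (as a subset of X). (The operator Φ' encodes one round of the game 𝒢^{II}_μ(F), where ∃ moves from x to a clopen U with x ∈ F(U), ∀ challenges with a clopen U' meeting U, and ∃ picks x' ∈ U', all infinite plays being won by ∀; its least fixed point is ∃'s winning region, so this is Proposition 3.2(1).) -/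
/-!
The least fixed point `W` of the round operator is contained in every clopen pre-fixed point
of `F`: a move to a clopen `U` that leaves a clopen `A` is refuted by the challenge `Aᶜ`.
Conversely `W` is a union of the open sets `F U`, so in an extremally disconnected space its
closure is clopen; since every clopen meeting `closure W` meets `W`, any move into
`closure W` wins, so `F (closure W) ⊆ W`. Hence `L ⊆ closure W`, and then the move to `L`
itself shows `L = F L ⊆ W`.
-/

open Set

section GameRound

variable {X : Type*} [TopologicalSpace X]

/-- The paper's operator `Φ'`, one round of the game `𝒢^{II}_μ(F)`. -/
def gameRound (F : Set X → Set X) (W : Set X) : Set X :=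
  {x | ∃ U : Set X, IsClopen U ∧ x ∈ F U ∧
    ∀ U' : Set X, IsClopen U' → (U ∩ U').Nonempty → ∃ x', x' ∈ U' ∩ W}

theorem gameRound_mono (F : Set X → Set X) : Monotone (gameRound F) := by
  rintro W W' hWW' x ⟨U, hU, hxU, hanswer⟩
  refine ⟨U, hU, hxU, fun U' hU' hmeet => ?_⟩
  obtain ⟨x', hx'U', hx'W⟩ := hanswer U' hU' hmeet
  exact ⟨x', hx'U', hWW' hx'W⟩

theorem isOpen_gameRound {F : Set X → Set X} (hF : ∀ U : Set X, IsClopen U → IsOpen (F U))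
    (W : Set X) : IsOpen (gameRound F W) :=
  isOpen_iff_forall_mem_open.mpr fun _ ⟨U, hU, hxU, hanswer⟩ =>
    ⟨F U, fun _ hy => ⟨U, hU, hy, hanswer⟩, hF U hU, hxU⟩

theorem gameRound_subset_apply {F : Set X → Set X}
    (hFmono : ∀ U V : Set X, IsClopen U → IsClopen V → U ⊆ V → F U ⊆ F V)
    {A : Set X} (hA : IsClopen A) : gameRound F A ⊆ F A := by
  rintro x ⟨U, hU, hxU, hanswer⟩
  have hUA : U ⊆ A := fun u hu => by_contra fun huA => by
    obtain ⟨x', hx'A, hx'A'⟩ := hanswer Aᶜ hA.compl ⟨u, hu, huA⟩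
    exact hx'A hx'A'
  exact hFmono U A hU hA hUA hxU

theorem apply_subset_gameRound (F : Set X → Set X) {C W : Set X} (hC : IsClopen C)
    (hCW : C ⊆ closure W) : F C ⊆ gameRound F W := by
  refine fun x hx => ⟨C, hC, hx, fun U' hU' ⟨u, huC, huU'⟩ => ?_⟩
  obtain ⟨x', hx'U', hx'W⟩ := mem_closure_iff.mp (hCW huC) U' hU'.isOpen huU'
  exact ⟨x', hx'U', hx'W⟩

theorem lfp_gameRound_eq [ExtremallyDisconnected X] {F : Set X → Set X}
    (hFclopen : ∀ U : Set X, IsClopen U → IsClopen (F U))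
    (hFmono : ∀ U V : Set X, IsClopen U → IsClopen V → U ⊆ V → F U ⊆ F V)
    {L : Set X} (hLclopen : IsClopen L) (hLfix : F L = L)
    (hLleast : ∀ A : Set X, IsClopen A → F A ⊆ A → L ⊆ A) :
    OrderHom.lfp ⟨gameRound F, gameRound_mono F⟩ = L := by
  set W := OrderHom.lfp ⟨gameRound F, gameRound_mono F⟩
  have hW : gameRound F W = W := OrderHom.map_lfp ⟨gameRound F, gameRound_mono F⟩
  have hWL : W ⊆ L :=
    OrderHom.lfp_le _ ((gameRound_subset_apply hFmono hLclopen).trans hLfix.subset)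
  have hWopen : IsOpen W := hW ▸ isOpen_gameRound (fun U hU => (hFclopen U hU).isOpen) W
  have hclosure : IsClopen (closure W) :=
    ⟨isClosed_closure, ExtremallyDisconnected.open_closure W hWopen⟩
  have hLclosure : L ⊆ closure W := hLleast _ hclosure <|
    (hW ▸ apply_subset_gameRound F hclosure subset_rfl).trans subset_closure
  have hLW : L ⊆ W := hW ▸ hLfix ▸ apply_subset_gameRound F hLclopen hLclosure
  exact hWL.antisymm hLW

end GameRound

theorem lfp_gameII_mu_eq_least_clopen_fixedPoint_general
    {X : Type*} [TopologicalSpace X] [ExtremallyDisconnected X]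
    (F : Set X → Set X) (hFclopen : ∀ U : Set X, IsClopen U → IsClopen (F U))
    (hFmono : ∀ U V : Set X, IsClopen U → IsClopen V → U ⊆ V → F U ⊆ F V)
    (L : Set X) (hLclopen : IsClopen L) (hLfix : F L = L)
    (hLleast : ∀ A : Set X, IsClopen A → F A ⊆ A → L ⊆ A)
    (Φ' : Set X → Set X)
    (hΦ' : Φ' = fun W : Set X =>
      {x : X | ∃ U : Set X, IsClopen U ∧ x ∈ F U ∧
        ∀ U' : Set X, IsClopen U' → (U ∩ U').Nonempty → ∃ x', x' ∈ U' ∩ W}) :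
    Monotone Φ' ∧ ∀ hm : Monotone Φ', OrderHom.lfp ⟨Φ', hm⟩ = L := by
  subst hΦ'
  exact ⟨gameRound_mono F, fun _ => lfp_gameRound_eq hFclopen hFmono hLclopen hLfix hLleast⟩

/-- Proposition 3.2(1): the least fixed point (in the powerset of `X`) of the operator
`Φ'` encoding one round of the game `𝒢^{II}_μ(F)` equals the least clopen fixed
point `L` of `F`. -/
theorem lfp_gameII_mu_eq_least_clopen_fixedPoint
    {X : Type*} [TopologicalSpace X] [CompactSpace X] [T2Space X]
    [TotallyDisconnectedSpace X] [ExtremallyDisconnected X]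
    (F : Set X → Set X) (hFclopen : ∀ U : Set X, IsClopen U → IsClopen (F U))
    (hFmono : ∀ U V : Set X, IsClopen U → IsClopen V → U ⊆ V → F U ⊆ F V)
    (L : Set X) (hLclopen : IsClopen L) (hLfix : F L = L)
    (hLleast : ∀ A : Set X, IsClopen A → F A ⊆ A → L ⊆ A)
    (Φ' : Set X → Set X)
    (hΦ' : Φ' = fun W : Set X =>
      {x : X | ∃ U : Set X, IsClopen U ∧ x ∈ F U ∧
        ∀ U' : Set X, IsClopen U' → (U ∩ U').Nonempty → ∃ x', x' ∈ U' ∩ W}) :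
    Monotone Φ' ∧ ∀ hm : Monotone Φ', OrderHom.lfp ⟨Φ', hm⟩ = L :=
  lfp_gameII_mu_eq_least_clopen_fixedPoint_general F hFclopen hFmono L hLclopen hLfix hLleast Φ' hΦ'
end

section
/- Let X be an extremally disconnected Stone space, let F be a monotone map on the clopen subsets of X, and let G be the greatest clopen fixed point of F. Define the monotone operator Ψ' on the powerset of X by Ψ'(W) = { x ∈ X | ∃ clopen U ⊆ X with x ∈ F(U) and U ⊆ W }. Then the greatest fixed point of Ψ' in the powerset lattice of X equals G (as a subset of X). (The operator Ψ' encodes one round of the game 𝒢^{II}_ν(F), where ∃ moves from x to a clopen U with x ∈ F(U) and ∀ picks an element of U, all infinite plays being won by ∃; its greatest fixed point is ∃'s winning region, so this is Proposition 3.2(2).) -/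
/-!
The set of points from which `∃` can move into `W` in one round is a union of the clopens
`F U`, hence open. For a post-fixed point `W` of `Ψ'` let `O = Ψ' W`: its closure is clopen
because `X` is extremally disconnected, and since every move `U ⊆ W ⊆ O` lies in `closure O`,
monotonicity of `F` gives `O ⊆ F (closure O)`, so `closure O` is a clopen post-fixed point of
`F` and `W ⊆ O ⊆ G`. Conversely `G` is post-fixed for `Ψ'`, witnessed by the move `U = G`.
-/

open Set

-- `Ψ'` of the game `𝒢^{II}_ν(F)`: the points from which `∃` can move to a clopen `U ⊆ W`.
def clopenCPre {X : Type*} [TopologicalSpace X] (F : Set X → Set X) (W : Set X) : Set X :=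
  {x | ∃ U : Set X, IsClopen U ∧ x ∈ F U ∧ U ⊆ W}

section

variable {X : Type*} [TopologicalSpace X] {F : Set X → Set X}

theorem monotone_clopenCPre : Monotone (clopenCPre F) := by
  rintro W V hWV x ⟨U, hU, hxU, hUW⟩
  exact ⟨U, hU, hxU, hUW.trans hWV⟩

theorem isOpen_clopenCPre (hFclopen : ∀ U : Set X, IsClopen U → IsClopen (F U)) (W : Set X) :
    IsOpen (clopenCPre F W) := by
  rw [isOpen_iff_forall_mem_open]
  rintro x ⟨U, hU, hxU, hUW⟩
  exact ⟨F U, fun y hy => ⟨U, hU, hy, hUW⟩, (hFclopen U hU).isOpen, hxU⟩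

theorem subset_clopenCPre_of_subset_map {A : Set X} (hA : IsClopen A) (hAF : A ⊆ F A) :
    A ⊆ clopenCPre F A :=
  fun _ hx => ⟨A, hA, hAF hx, subset_rfl⟩

theorem closure_clopenCPre_subset_map [ExtremallyDisconnected X]
    (hFclopen : ∀ U : Set X, IsClopen U → IsClopen (F U))
    (hFmono : ∀ U V : Set X, IsClopen U → IsClopen V → U ⊆ V → F U ⊆ F V)
    {W : Set X} (hW : W ⊆ clopenCPre F W) :
    IsClopen (closure (clopenCPre F W)) ∧
      closure (clopenCPre F W) ⊆ F (closure (clopenCPre F W)) := by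
  set O := clopenCPre F W
  have hO : IsClopen (closure O) :=
    ⟨isClosed_closure, ExtremallyDisconnected.open_closure O (isOpen_clopenCPre hFclopen W)⟩
  have hOF : O ⊆ F (closure O) := by
    rintro x ⟨U, hU, hxU, hUW⟩
    exact hFmono U _ hU hO (hUW.trans (hW.trans subset_closure)) hxU
  exact ⟨hO, (hFclopen _ hO).isClosed.closure_subset_iff.mpr hOF⟩

theorem subset_of_subset_clopenCPre [ExtremallyDisconnected X]
    (hFclopen : ∀ U : Set X, IsClopen U → IsClopen (F U))
    (hFmono : ∀ U V : Set X, IsClopen U → IsClopen V → U ⊆ V → F U ⊆ F V)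
    {G : Set X} (hGgreatest : ∀ A : Set X, IsClopen A → A ⊆ F A → A ⊆ G)
    {W : Set X} (hW : W ⊆ clopenCPre F W) : W ⊆ G :=
  let ⟨hO, hOF⟩ := closure_clopenCPre_subset_map hFclopen hFmono hW
  hW.trans (subset_closure.trans (hGgreatest _ hO hOF))

end

theorem gfp_gameII_nu_eq_greatest_clopen_fixedPoint_general
    {X : Type*} [TopologicalSpace X]
    [ExtremallyDisconnected X]
    (F : Set X → Set X) (hFclopen : ∀ U : Set X, IsClopen U → IsClopen (F U))
    (hFmono : ∀ U V : Set X, IsClopen U → IsClopen V → U ⊆ V → F U ⊆ F V)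
    (G : Set X) (hGclopen : IsClopen G) (hGfix : F G = G)
    (hGgreatest : ∀ A : Set X, IsClopen A → A ⊆ F A → A ⊆ G)
    (Ψ' : Set X → Set X)
    (hΨ' : Ψ' = fun W : Set X =>
      {x : X | ∃ U : Set X, IsClopen U ∧ x ∈ F U ∧ U ⊆ W}) :
    Monotone Ψ' ∧ ∀ hm : Monotone Ψ', OrderHom.gfp ⟨Ψ', hm⟩ = G := by
  obtain rfl : Ψ' = clopenCPre F := hΨ'
  refine ⟨monotone_clopenCPre, fun hm => le_antisymm ?_ ?_⟩
  · exact OrderHom.gfp_le _ fun W hW => subset_of_subset_clopenCPre hFclopen hFmono hGgreatest hW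
  · exact OrderHom.le_gfp _ (subset_clopenCPre_of_subset_map hGclopen hGfix.ge)

/-- Proposition 3.2(2): the greatest fixed point (in the powerset of `X`) of the operator
`Ψ'` encoding one round of the game `𝒢^{II}_ν(F)` equals the greatest clopen fixed
point `G` of `F`. -/
theorem gfp_gameII_nu_eq_greatest_clopen_fixedPoint
    {X : Type*} [TopologicalSpace X] [CompactSpace X] [T2Space X]
    [TotallyDisconnectedSpace X] [ExtremallyDisconnected X]
    (F : Set X → Set X) (hFclopen : ∀ U : Set X, IsClopen U → IsClopen (F U))
    (hFmono : ∀ U V : Set X, IsClopen U → IsClopen V → U ⊆ V → F U ⊆ F V)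
    (G : Set X) (hGclopen : IsClopen G) (hGfix : F G = G)
    (hGgreatest : ∀ A : Set X, IsClopen A → A ⊆ F A → A ⊆ G)
    (Ψ' : Set X → Set X)
    (hΨ' : Ψ' = fun W : Set X =>
      {x : X | ∃ U : Set X, IsClopen U ∧ x ∈ F U ∧ U ⊆ W}) :
    Monotone Ψ' ∧ ∀ hm : Monotone Ψ', OrderHom.gfp ⟨Ψ', hm⟩ = G :=
  gfp_gameII_nu_eq_greatest_clopen_fixedPoint_general F hFclopen hFmono G hGclopen hGfix hGgreatest
    Ψ' hΨ'
end

section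
/- Let X = ℕ ∪ {∞} be the one-point compactification of the discrete space ℕ, and let R be the relation on X given by: x R y iff (there is n ∈ ℕ with x = n+1 and y = n) or (x = ∞ and y = ∞). Define F on the powerset of X by F(S) = {0} ∪ { x ∈ X | ∃ y ∈ S with x R y }. Then the only clopen subset U of X satisfying F(U) ⊆ U is the whole space X; in particular X is the least clopen fixed point of F, while the least fixed point of F in the full powerset is the proper subset ℕ. -/
/-!
Every prefixed point of `F` contains `0` and is closed under successor, hence contains `ℕ`.
Since `ℕ` is dense in its one-point compactification, a closed prefixed point is the whole
space. In the full powerset, `∞` is reachable only from `∞`, so `ℕ` itself is already a fixed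
point.
-/

open OnePoint

/-- The relation on `ℕ ∪ {∞}`: `x R y` iff `x = n+1` and `y = n` for some natural
number `n`, or `x = ∞ = y`. -/
def exampleRel : OnePoint ℕ → OnePoint ℕ → Prop := fun x y =>
  (∃ n : ℕ, x = ((n + 1 : ℕ) : OnePoint ℕ) ∧ y = ((n : ℕ) : OnePoint ℕ)) ∨
    (x = (∞ : OnePoint ℕ) ∧ y = (∞ : OnePoint ℕ))

/-- The operator `F(S) = {0} ∪ ◇S` on the powerset of `ℕ ∪ {∞}`. -/
def exampleOp : Set (OnePoint ℕ) → Set (OnePoint ℕ) := fun S =>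
  {((0 : ℕ) : OnePoint ℕ)} ∪ {x : OnePoint ℕ | ∃ y ∈ S, exampleRel x y}

theorem OnePoint.eq_univ_of_isClosed_of_range_coe_subset {X : Type*} [TopologicalSpace X]
    [NoncompactSpace X] {U : Set (OnePoint X)} (hU : IsClosed U)
    (hrange : Set.range ((↑) : X → OnePoint X) ⊆ U) : U = Set.univ :=
  hU.closure_eq ▸ ((OnePoint.denseRange_coe (X := X)).mono hrange).closure_eq

theorem exampleRel_succ (n : ℕ) : exampleRel ((n + 1 : ℕ) : OnePoint ℕ) (n : OnePoint ℕ) :=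
  Or.inl ⟨n, rfl, rfl⟩

theorem exampleRel_infty : exampleRel ∞ ∞ :=
  Or.inr ⟨rfl, rfl⟩

theorem exampleRel_coe_right {x : OnePoint ℕ} {m : ℕ} (h : exampleRel x m) :
    x = ((m + 1 : ℕ) : OnePoint ℕ) := by
  rcases h with ⟨n, rfl, hm⟩ | ⟨-, hm⟩
  · rw [OnePoint.coe_injective hm]
  · exact absurd hm.symm (OnePoint.infty_ne_coe m)

theorem zero_mem_exampleOp (S : Set (OnePoint ℕ)) : ((0 : ℕ) : OnePoint ℕ) ∈ exampleOp S :=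
  Or.inl rfl

theorem succ_mem_exampleOp {S : Set (OnePoint ℕ)} {n : ℕ} (hn : (n : OnePoint ℕ) ∈ S) :
    ((n + 1 : ℕ) : OnePoint ℕ) ∈ exampleOp S :=
  Or.inr ⟨n, hn, exampleRel_succ n⟩

theorem range_coe_subset_of_exampleOp_subset {S : Set (OnePoint ℕ)} (hS : exampleOp S ⊆ S) :
    Set.range ((↑) : ℕ → OnePoint ℕ) ⊆ S := by
  rintro _ ⟨n, rfl⟩
  induction n with
  | zero => exact hS (zero_mem_exampleOp S)
  | succ k ih => exact hS (succ_mem_exampleOp ih)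

theorem exampleOp_univ : exampleOp Set.univ = Set.univ := by
  refine Set.eq_univ_of_forall fun x => ?_
  induction x using OnePoint.rec with
  | infty => exact Or.inr ⟨∞, trivial, exampleRel_infty⟩
  | coe n =>
    cases n with
    | zero => exact zero_mem_exampleOp _
    | succ k => exact succ_mem_exampleOp trivial

theorem exampleOp_range_coe :
    exampleOp (Set.range ((↑) : ℕ → OnePoint ℕ)) = Set.range ((↑) : ℕ → OnePoint ℕ) := by
  refine Set.Subset.antisymm ?_ fun x hx => ?_
  · rintro x (rfl | ⟨_, ⟨m, rfl⟩, hx⟩)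
    · exact ⟨0, rfl⟩
    · exact ⟨m + 1, (exampleRel_coe_right hx).symm⟩
  · obtain ⟨n | k, rfl⟩ := hx
    · exact zero_mem_exampleOp _
    · exact succ_mem_exampleOp ⟨k, rfl⟩

/-- On the one-point compactification `X = ℕ ∪ {∞}` of the discrete space `ℕ`, the only
clopen `U` with `F(U) ⊆ U` is the whole space; in particular `X` is the least clopen
fixed point of `F`, while the least fixed point of `F` in the full powerset is the
proper subset `ℕ`. -/
theorem least_clopen_prefixedPoint_exampleOp_is_univ :
    (∀ U : Set (OnePoint ℕ), IsClopen U → exampleOp U ⊆ U → U = Set.univ) ∧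
      exampleOp Set.univ = Set.univ ∧
      (exampleOp (Set.range ((↑) : ℕ → OnePoint ℕ)) =
          Set.range ((↑) : ℕ → OnePoint ℕ) ∧
        (∀ S : Set (OnePoint ℕ), exampleOp S ⊆ S →
          Set.range ((↑) : ℕ → OnePoint ℕ) ⊆ S) ∧
        Set.range ((↑) : ℕ → OnePoint ℕ) ≠ Set.univ) :=
  ⟨fun _ hU hF => OnePoint.eq_univ_of_isClosed_of_range_coe_subset hU.isClosed
      (range_coe_subset_of_exampleOp_subset hF),
    exampleOp_univ, exampleOp_range_coe, fun _ => range_coe_subset_of_exampleOp_subset,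
    fun h => OnePoint.infty_notMem_range_coe (h ▸ Set.mem_univ ∞)⟩
end

section
/- Let M₁ = (X₁, R₁, V₁) and M₂ = (X₂, R₂, V₂) be extremally disconnected modal spaces with clopen valuations, and let Z ⊆ X₁ × X₂ be a clopen bisimulation between them. Then for every formula φ of the modal μ-calculus in negation normal form and all points x ∈ X₁, x' ∈ X₂ with (x, x') ∈ Z, one has x ∈ ⟦φ⟧_{V₁} if and only if x' ∈ ⟦φ⟧_{V₂}. -/
/-!
A clopen bisimulation `Z` carries truth forward, `Z[⟦φ⟧₁] ⊆ ⟦φ⟧₂`, and applying this to `Z` and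
to `Z⁻¹` gives the equivalence. The inclusion is proved by induction on `φ`; the modal cases are
the back-and-forth conditions. For `μp.ψ`, the set `{x | Z[x] ⊆ ⟦μp.ψ⟧₂}` is clopen because `Z⁻¹`
preserves clopens, and by induction it is a prefixed point of the operator defining `⟦μp.ψ⟧₁`;
dually, for `νp.ψ` the clopen set `Z[⟦νp.ψ⟧₁]` is a postfixed point on the right. Both arguments
need the clopen fixpoints to be prefixed (resp. postfixed) points themselves, which holds because
extremal disconnectedness makes them clopen.
-/


/-- Formulas of the modal μ-calculus in negation normal form over propositional
variables of type `P`. -/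
inductive MuForm (P : Type*) : Type _
  | var : P → MuForm P
  | nvar : P → MuForm P
  | bot : MuForm P
  | top : MuForm P
  | and : MuForm P → MuForm P → MuForm P
  | or : MuForm P → MuForm P → MuForm P
  | dia : MuForm P → MuForm P
  | box : MuForm P → MuForm P
  | mu : P → MuForm P → MuForm P
  | nu : P → MuForm P → MuForm P

/-- The variable `p` does not occur negated in the formula. -/
def MuForm.NegFree {P : Type*} (p : P) : MuForm P → Prop
  | .var _ => True
  | .nvar q => q ≠ p
  | .bot => True
  | .top => True
  | .and φ ψ => φ.NegFree p ∧ ψ.NegFree p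
  | .or φ ψ => φ.NegFree p ∧ ψ.NegFree p
  | .dia φ => φ.NegFree p
  | .box φ => φ.NegFree p
  | .mu _ φ => φ.NegFree p
  | .nu _ φ => φ.NegFree p

/-- Well-formedness: every fixpoint binder `μp.φ` / `νp.φ` binds a variable that does
not occur negated in its body. -/
def MuForm.WellFormed {P : Type*} : MuForm P → Prop
  | .var _ => True
  | .nvar _ => True
  | .bot => True
  | .top => True
  | .and φ ψ => φ.WellFormed ∧ ψ.WellFormed
  | .or φ ψ => φ.WellFormed ∧ ψ.WellFormed
  | .dia φ => φ.WellFormed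
  | .box φ => φ.WellFormed
  | .mu p φ => φ.NegFree p ∧ φ.WellFormed
  | .nu p φ => φ.NegFree p ∧ φ.WellFormed

/-- The least clopen fixed point of an operator on subsets of a topological space:
the infimum, in the complete lattice of clopen sets of an extremally disconnected
space, of the clopen prefixed points. -/
def clopenLfp {X : Type*} [TopologicalSpace X] (G : Set X → Set X) : Set X :=
  interior (⋂₀ {A : Set X | IsClopen A ∧ G A ⊆ A})

/-- The greatest clopen fixed point of an operator on subsets of a topological space:
the supremum, in the complete lattice of clopen sets of an extremally disconnected
space, of the clopen postfixed points. -/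
def clopenGfp {X : Type*} [TopologicalSpace X] (G : Set X → Set X) : Set X :=
  closure (⋃₀ {A : Set X | IsClopen A ∧ A ⊆ G A})

/-- The clopen semantics `⟦φ⟧_V` of a μ-calculus formula on a topological Kripke
frame `(X, R)`, where fixpoint operators are interpreted in the lattice of clopen
sets. -/
def clopenSem {X : Type*} [TopologicalSpace X] {P : Type*} [DecidableEq P]
    (R : X → X → Prop) : MuForm P → (P → Set X) → Set X
  | .var p, V => V p
  | .nvar p, V => (V p)ᶜ
  | .bot, _ => ∅
  | .top, _ => Set.univ
  | .and φ ψ, V => clopenSem R φ V ∩ clopenSem R ψ V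
  | .or φ ψ, V => clopenSem R φ V ∪ clopenSem R ψ V
  | .dia φ, V => {x : X | ∃ y, R x y ∧ y ∈ clopenSem R φ V}
  | .box φ, V => {x : X | ∀ y, R x y → y ∈ clopenSem R φ V}
  | .mu p φ, V => clopenLfp (fun U => clopenSem R φ (Function.update V p U))
  | .nu p φ, V => clopenGfp (fun U => clopenSem R φ (Function.update V p U))

open Function

section ClopenFixpoints

variable {X : Type*} [TopologicalSpace X] {G G' : Set X → Set X} {A : Set X}

lemma clopenLfp_subset (hA : IsClopen A) (hGA : G A ⊆ A) : clopenLfp G ⊆ A :=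
  interior_subset.trans (Set.sInter_subset_of_mem ⟨hA, hGA⟩)

lemma subset_clopenGfp (hA : IsClopen A) (hGA : A ⊆ G A) : A ⊆ clopenGfp G :=
  fun _ hx => subset_closure ⟨A, ⟨hA, hGA⟩, hx⟩

lemma clopenLfp_mono (h : ∀ U, G U ⊆ G' U) : clopenLfp G ⊆ clopenLfp G' :=
  interior_mono <| Set.sInter_subset_sInter fun A hA => ⟨hA.1, (h A).trans hA.2⟩

lemma clopenGfp_mono (h : ∀ U, G U ⊆ G' U) : clopenGfp G ⊆ clopenGfp G' :=
  closure_mono <| Set.sUnion_mono fun A hA => ⟨hA.1, hA.2.trans (h A)⟩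

variable [ExtremallyDisconnected X]

lemma isClopen_clopenLfp (G : Set X → Set X) : IsClopen (clopenLfp G) := by
  have hopen : IsOpen (⋂₀ {A : Set X | IsClopen A ∧ G A ⊆ A})ᶜ :=
    (isClosed_sInter fun _ hA => hA.1.isClosed).isOpen_compl
  refine ⟨?_, isOpen_interior⟩
  rw [clopenLfp, ← compl_compl (interior _), ← closure_compl]
  exact (ExtremallyDisconnected.open_closure _ hopen).isClosed_compl

lemma isClopen_clopenGfp (G : Set X → Set X) : IsClopen (clopenGfp G) :=
  ⟨isClosed_closure,
    ExtremallyDisconnected.open_closure _ (isOpen_sUnion fun _ hA => hA.1.isOpen)⟩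

lemma map_clopenLfp_subset (hG : Monotone G) (hGc : ∀ U, IsClopen U → IsClopen (G U)) :
    G (clopenLfp G) ⊆ clopenLfp G := by
  have hle : G (clopenLfp G) ⊆ ⋂₀ {A : Set X | IsClopen A ∧ G A ⊆ A} :=
    Set.subset_sInter fun A hA => (hG (clopenLfp_subset hA.1 hA.2)).trans hA.2
  exact interior_maximal hle (hGc _ (isClopen_clopenLfp G)).isOpen

lemma clopenGfp_subset_map (hG : Monotone G) (hGc : ∀ U, IsClopen U → IsClopen (G U)) :
    clopenGfp G ⊆ G (clopenGfp G) := by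
  have hle : ⋃₀ {A : Set X | IsClopen A ∧ A ⊆ G A} ⊆ G (clopenGfp G) :=
    Set.sUnion_subset fun A hA => hA.2.trans (hG (subset_clopenGfp hA.1 hA.2))
  exact closure_minimal hle (hGc _ (isClopen_clopenGfp G)).isClosed

end ClopenFixpoints

section Update

variable {P X₁ X₂ : Type*} [DecidableEq P] {p : P}

lemma Function.forall_update₂ {α β : Type*} {Q : P → α → β → Prop} {f : P → α} {g : P → β}
    {a : α} {b : β} (h : ∀ q, Q q (f q) (g q)) (hp : Q p a b) :
    ∀ q, Q q (update f p a q) (update g p b q) := by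
  intro q
  rcases eq_or_ne q p with rfl | hq
  · simpa using hp
  · simpa [update_of_ne hq] using h q

lemma forall_isClopen_update [TopologicalSpace X₁] {V : P → Set X₁} {U : Set X₁}
    (hV : ∀ q, IsClopen (V q)) (hU : IsClopen U) : ∀ q, IsClopen (update V p U q) :=
  (forall_update_iff V fun _ s => IsClopen s).2 ⟨hU, fun q _ => hV q⟩

variable {Z : SetRel X₁ X₂} {V₁ : P → Set X₁} {V₂ : P → Set X₂} {U₁ : Set X₁} {U₂ : Set X₂}

lemma forall_image_update_subset (h : ∀ q, Z.image (V₁ q) ⊆ V₂ q) (hU : Z.image U₁ ⊆ U₂) :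
    ∀ q, Z.image (update V₁ p U₁ q) ⊆ update V₂ p U₂ q :=
  forall_update₂ (Q := fun _ A B => Z.image A ⊆ B) h hU

lemma forall_preimage_update_subset {S : P → Prop} (h : ∀ q, ¬ S q → Z.preimage (V₂ q) ⊆ V₁ q)
    (hp : S p) : ∀ q, ¬ S q → Z.preimage (update V₂ p U₂ q) ⊆ update V₁ p U₁ q :=
  forall_update₂ (Q := fun q A B => ¬ S q → Z.preimage B ⊆ A) h fun hS => (hS hp).elim

end Update

section Semantics

variable {X : Type*} [TopologicalSpace X] {P : Type*} [DecidableEq P] (R : X → X → Prop)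

lemma isClopen_clopenSem [ExtremallyDisconnected X]
    (hR : ∀ U : Set X, IsClopen U → IsClopen {x : X | ∃ y ∈ U, R x y})
    (φ : MuForm P) {V : P → Set X} (hV : ∀ q, IsClopen (V q)) :
    IsClopen (clopenSem R φ V) := by
  induction φ with
  | var p => exact hV p
  | nvar p => exact (hV p).compl
  | bot => exact isClopen_empty
  | top => exact isClopen_univ
  | and φ ψ ihφ ihψ => exact ihφ.inter ihψ
  | or φ ψ ihφ ihψ => exact ihφ.union ihψ
  | dia φ ih =>
    convert hR _ ih using 1
    ext x
    simp only [clopenSem, Set.mem_ofPred_eq, and_comm]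
  | box φ ih =>
    convert (hR _ ih.compl).compl using 1
    ext x
    simpa [clopenSem] using forall_congr' fun _ => not_imp_not.symm
  | mu p φ _ => exact isClopen_clopenLfp _
  | nu p φ _ => exact isClopen_clopenGfp _

lemma monotone_clopenSem_update {p : P} {φ : MuForm P} (hφ : φ.NegFree p) (V : P → Set X) :
    Monotone fun U => clopenSem R φ (update V p U) := by
  induction φ generalizing V with
  | var q =>
    intro U U' hU
    rcases eq_or_ne q p with rfl | hq
    · simpa [clopenSem] using hU
    · simp [clopenSem, update_of_ne hq]
  | nvar q =>
    intro U U' _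
    simp [clopenSem, update_of_ne (show q ≠ p from hφ)]
  | bot => exact monotone_const
  | top => exact monotone_const
  | and φ ψ ihφ ihψ => exact (ihφ hφ.1 V).inter (ihψ hφ.2 V)
  | or φ ψ ihφ ihψ => exact (ihφ hφ.1 V).union (ihψ hφ.2 V)
  | dia φ ih =>
    intro U U' hU x ⟨y, hxy, hy⟩
    exact ⟨y, hxy, ih hφ V hU hy⟩
  | box φ ih =>
    intro U U' hU x hx y hxy
    exact ih hφ V hU (hx y hxy)
  | mu q ψ ih =>
    intro U U' hU
    rcases eq_or_ne q p with rfl | hq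
    · exact clopenLfp_mono fun W => by simp only [update_idem, subset_rfl]
    · refine clopenLfp_mono fun W => ?_
      simp only [update_comm hq.symm]
      exact ih hφ _ hU
  | nu q ψ ih =>
    intro U U' hU
    rcases eq_or_ne q p with rfl | hq
    · exact clopenGfp_mono fun W => by simp only [update_idem, subset_rfl]
    · refine clopenGfp_mono fun W => ?_
      simp only [update_comm hq.symm]
      exact ih hφ _ hU

end Semantics

structure IsClopenFrameBisimulation {X₁ X₂ : Type*} [TopologicalSpace X₁] [TopologicalSpace X₂]
    (R₁ : X₁ → X₁ → Prop) (R₂ : X₂ → X₂ → Prop) (Z : SetRel X₁ X₂) : Prop where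
  forth : ∀ x x', (x, x') ∈ Z → ∀ y, R₁ x y → ∃ y', R₂ x' y' ∧ (y, y') ∈ Z
  back : ∀ x x', (x, x') ∈ Z → ∀ y', R₂ x' y' → ∃ y, R₁ x y ∧ (y, y') ∈ Z
  isClopen_image : ∀ U, IsClopen U → IsClopen (Z.image U)
  isClopen_preimage : ∀ U, IsClopen U → IsClopen (Z.preimage U)

namespace IsClopenFrameBisimulation

variable {X₁ X₂ : Type*} [TopologicalSpace X₁] [TopologicalSpace X₂]
  {R₁ : X₁ → X₁ → Prop} {R₂ : X₂ → X₂ → Prop} {Z : SetRel X₁ X₂}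

lemma inv (hZ : IsClopenFrameBisimulation R₁ R₂ Z) : IsClopenFrameBisimulation R₂ R₁ Z.inv where
  forth x' x h := hZ.back x x' h
  back x' x h := hZ.forth x x' h
  isClopen_image := hZ.isClopen_preimage
  isClopen_preimage := hZ.isClopen_image

lemma isClopen_core (hZ : IsClopenFrameBisimulation R₁ R₂ Z) {U : Set X₂} (hU : IsClopen U) :
    IsClopen (Z.core U) := by
  convert (hZ.isClopen_preimage _ hU.compl).compl using 1
  ext x
  simpa using forall_congr' fun _ => not_imp_not.symm

lemma image_clopenLfp_subset [ExtremallyDisconnected X₂] (hZ : IsClopenFrameBisimulation R₁ R₂ Z)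
    {G₁ : Set X₁ → Set X₁} {G₂ : Set X₂ → Set X₂} (hG₂ : Monotone G₂)
    (hG₂c : ∀ U, IsClopen U → IsClopen (G₂ U))
    (h : ∀ U, IsClopen U → Z.image (G₁ (Z.core U)) ⊆ G₂ U) :
    Z.image (clopenLfp G₁) ⊆ clopenLfp G₂ := by
  have hL : IsClopen (clopenLfp G₂) := isClopen_clopenLfp G₂
  rw [SetRel.image_subset_iff]
  exact clopenLfp_subset (hZ.isClopen_core hL)
    (SetRel.image_subset_iff.1 ((h _ hL).trans (map_clopenLfp_subset hG₂ hG₂c)))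

lemma image_clopenGfp_subset [ExtremallyDisconnected X₁] (hZ : IsClopenFrameBisimulation R₁ R₂ Z)
    {G₁ : Set X₁ → Set X₁} {G₂ : Set X₂ → Set X₂} (hG₁ : Monotone G₁)
    (hG₁c : ∀ U, IsClopen U → IsClopen (G₁ U))
    (h : ∀ U, IsClopen U → Z.image (G₁ U) ⊆ G₂ (Z.image U)) :
    Z.image (clopenGfp G₁) ⊆ clopenGfp G₂ := by
  have hN : IsClopen (clopenGfp G₁) := isClopen_clopenGfp G₁
  exact subset_clopenGfp (hZ.isClopen_image _ hN)
    ((SetRel.image_subset_image (clopenGfp_subset_map hG₁ hG₁c)).trans (h _ hN))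

-- In the fixpoint cases the bound variable is related only forwards, hence the one-sided `hneg`.
theorem image_clopenSem_subset [ExtremallyDisconnected X₁] [ExtremallyDisconnected X₂]
    {P : Type*} [DecidableEq P] (hZ : IsClopenFrameBisimulation R₁ R₂ Z)
    (hR₁ : ∀ U : Set X₁, IsClopen U → IsClopen {x : X₁ | ∃ y ∈ U, R₁ x y})
    (hR₂ : ∀ U : Set X₂, IsClopen U → IsClopen {x : X₂ | ∃ y ∈ U, R₂ x y})
    {φ : MuForm P} (hφ : φ.WellFormed) {V₁ : P → Set X₁} {V₂ : P → Set X₂}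
    (hV₁ : ∀ q, IsClopen (V₁ q)) (hV₂ : ∀ q, IsClopen (V₂ q)) (hpos : ∀ q, Z.image (V₁ q) ⊆ V₂ q)
    (hneg : ∀ q, ¬ φ.NegFree q → Z.preimage (V₂ q) ⊆ V₁ q) :
    Z.image (clopenSem R₁ φ V₁) ⊆ clopenSem R₂ φ V₂ := by
  induction φ generalizing V₁ V₂ with
  | var p => exact hpos p
  | nvar p =>
    rintro x' ⟨x, hx, hxx'⟩ hx'
    exact hx (hneg p (fun h => h rfl) ⟨x', hx', hxx'⟩)
  | bot => simp [clopenSem]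
  | top => exact Set.subset_univ _
  | and φ ψ ihφ ihψ =>
    refine (SetRel.image_inter_subset Z).trans (Set.inter_subset_inter ?_ ?_)
    · exact ihφ hφ.1 hV₁ hV₂ hpos fun q hq => hneg q fun h => hq h.1
    · exact ihψ hφ.2 hV₁ hV₂ hpos fun q hq => hneg q fun h => hq h.2
  | or φ ψ ihφ ihψ =>
    refine (SetRel.image_union Z _ _).trans_subset (Set.union_subset_union ?_ ?_)
    · exact ihφ hφ.1 hV₁ hV₂ hpos fun q hq => hneg q fun h => hq h.1
    · exact ihψ hφ.2 hV₁ hV₂ hpos fun q hq => hneg q fun h => hq h.2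
  | dia φ ih =>
    rintro x' ⟨x, ⟨y, hxy, hy⟩, hxx'⟩
    obtain ⟨y', hx'y', hyy'⟩ := hZ.forth x x' hxx' y hxy
    exact ⟨y', hx'y', ih hφ hV₁ hV₂ hpos hneg ⟨y, hy, hyy'⟩⟩
  | box φ ih =>
    rintro x' ⟨x, hx, hxx'⟩ y' hx'y'
    obtain ⟨y, hxy, hyy'⟩ := hZ.back x x' hxx' y' hx'y'
    exact ih hφ hV₁ hV₂ hpos hneg ⟨y, hx y hxy, hyy'⟩
  | mu p ψ ih =>
    refine hZ.image_clopenLfp_subset (monotone_clopenSem_update R₂ hφ.1 V₂)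
      (fun _ hU => isClopen_clopenSem R₂ hR₂ ψ (forall_isClopen_update hV₂ hU)) fun U hU => ?_
    exact ih hφ.2 (forall_isClopen_update hV₁ (hZ.isClopen_core hU))
      (forall_isClopen_update hV₂ hU)
      (forall_image_update_subset hpos (SetRel.image_subset_iff.2 subset_rfl))
      (forall_preimage_update_subset hneg hφ.1)
  | nu p ψ ih =>
    refine hZ.image_clopenGfp_subset (monotone_clopenSem_update R₁ hφ.1 V₁)
      (fun _ hU => isClopen_clopenSem R₁ hR₁ ψ (forall_isClopen_update hV₁ hU)) fun U hU => ?_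
    exact ih hφ.2 (forall_isClopen_update hV₁ hU)
      (forall_isClopen_update hV₂ (hZ.isClopen_image _ hU))
      (forall_image_update_subset hpos subset_rfl) (forall_preimage_update_subset hneg hφ.1)

end IsClopenFrameBisimulation

theorem clopenSem_invariant_under_clopen_bisimulation_general
    {X₁ : Type*} [TopologicalSpace X₁] [ExtremallyDisconnected X₁]
    {X₂ : Type*} [TopologicalSpace X₂] [ExtremallyDisconnected X₂]
    (R₁ : X₁ → X₁ → Prop)
    (hR₁_clopen : ∀ U : Set X₁, IsClopen U → IsClopen {x : X₁ | ∃ y ∈ U, R₁ x y})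
    (R₂ : X₂ → X₂ → Prop)
    (hR₂_clopen : ∀ U : Set X₂, IsClopen U → IsClopen {x : X₂ | ∃ y ∈ U, R₂ x y})
    {P : Type*} [DecidableEq P]
    (V₁ : P → Set X₁) (hV₁ : ∀ q : P, IsClopen (V₁ q))
    (V₂ : P → Set X₂) (hV₂ : ∀ q : P, IsClopen (V₂ q))
    (Z : Set (X₁ × X₂))
    (hZ_atoms : ∀ x x', (x, x') ∈ Z → ∀ q : P, x ∈ V₁ q ↔ x' ∈ V₂ q)
    (hZ_forth : ∀ x x', (x, x') ∈ Z → ∀ y, R₁ x y → ∃ y', R₂ x' y' ∧ (y, y') ∈ Z)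
    (hZ_back : ∀ x x', (x, x') ∈ Z → ∀ y', R₂ x' y' → ∃ y, R₁ x y ∧ (y, y') ∈ Z)
    (hZ_img : ∀ U₁ : Set X₁, IsClopen U₁ →
      IsClopen {x' : X₂ | ∃ x ∈ U₁, (x, x') ∈ Z})
    (hZ_preimg : ∀ U₂ : Set X₂, IsClopen U₂ →
      IsClopen {x : X₁ | ∃ x' ∈ U₂, (x, x') ∈ Z})
    (φ : MuForm P) (hφ : φ.WellFormed)
    (x : X₁) (x' : X₂) (hxx' : (x, x') ∈ Z) :
    x ∈ clopenSem R₁ φ V₁ ↔ x' ∈ clopenSem R₂ φ V₂ := by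
  have hZ : IsClopenFrameBisimulation R₁ R₂ Z := ⟨hZ_forth, hZ_back, hZ_img, hZ_preimg⟩
  have hfwd : ∀ q, SetRel.image Z (V₁ q) ⊆ V₂ q :=
    fun q _ ⟨y, hy, hyy'⟩ => (hZ_atoms y _ hyy' q).1 hy
  have hbwd : ∀ q, SetRel.preimage Z (V₂ q) ⊆ V₁ q :=
    fun q _ ⟨y', hy', hyy'⟩ => (hZ_atoms _ y' hyy' q).2 hy'
  constructor
  · exact fun hx => hZ.image_clopenSem_subset hR₁_clopen hR₂_clopen hφ hV₁ hV₂ hfwd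
      (fun q _ => hbwd q) ⟨x, hx, hxx'⟩
  · exact fun hx' => hZ.inv.image_clopenSem_subset hR₂_clopen hR₁_clopen hφ hV₂ hV₁ hbwd
      (fun q _ => hfwd q) ⟨x', hx', hxx'⟩

/-- Proposition 5.2: truth of topological μ-calculus formulas is invariant under
clopen bisimulations between extremally disconnected modal spaces with clopen
valuations. -/
theorem clopenSem_invariant_under_clopen_bisimulation
    {X₁ : Type*} [TopologicalSpace X₁] [CompactSpace X₁] [T2Space X₁]
    [TotallyDisconnectedSpace X₁] [ExtremallyDisconnected X₁]
    {X₂ : Type*} [TopologicalSpace X₂] [CompactSpace X₂] [T2Space X₂]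
    [TotallyDisconnectedSpace X₂] [ExtremallyDisconnected X₂]
    (R₁ : X₁ → X₁ → Prop)
    (hR₁_pointClosed : ∀ x : X₁, IsClosed {y : X₁ | R₁ x y})
    (hR₁_clopen : ∀ U : Set X₁, IsClopen U → IsClopen {x : X₁ | ∃ y ∈ U, R₁ x y})
    (R₂ : X₂ → X₂ → Prop)
    (hR₂_pointClosed : ∀ x : X₂, IsClosed {y : X₂ | R₂ x y})
    (hR₂_clopen : ∀ U : Set X₂, IsClopen U → IsClopen {x : X₂ | ∃ y ∈ U, R₂ x y})
    {P : Type*} [DecidableEq P]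
    (V₁ : P → Set X₁) (hV₁ : ∀ q : P, IsClopen (V₁ q))
    (V₂ : P → Set X₂) (hV₂ : ∀ q : P, IsClopen (V₂ q))
    (Z : Set (X₁ × X₂))
    (hZ_atoms : ∀ x x', (x, x') ∈ Z → ∀ q : P, x ∈ V₁ q ↔ x' ∈ V₂ q)
    (hZ_forth : ∀ x x', (x, x') ∈ Z → ∀ y, R₁ x y → ∃ y', R₂ x' y' ∧ (y, y') ∈ Z)
    (hZ_back : ∀ x x', (x, x') ∈ Z → ∀ y', R₂ x' y' → ∃ y, R₁ x y ∧ (y, y') ∈ Z)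
    (hZ_img : ∀ U₁ : Set X₁, IsClopen U₁ →
      IsClopen {x' : X₂ | ∃ x ∈ U₁, (x, x') ∈ Z})
    (hZ_preimg : ∀ U₂ : Set X₂, IsClopen U₂ →
      IsClopen {x : X₁ | ∃ x' ∈ U₂, (x, x') ∈ Z})
    (φ : MuForm P) (hφ : φ.WellFormed)
    (x : X₁) (x' : X₂) (hxx' : (x, x') ∈ Z) :
    x ∈ clopenSem R₁ φ V₁ ↔ x' ∈ clopenSem R₂ φ V₂ :=
  clopenSem_invariant_under_clopen_bisimulation_general R₁ hR₁_clopen R₂ hR₂_clopen V₁ hV₁ V₂ hV₂ Z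
    hZ_atoms hZ_forth hZ_back hZ_img hZ_preimg φ hφ x x' hxx'
end
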